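/- arXiv:2210.15341 — 2 statements merged into one kernel-verified Lean document; each statement's English description precedes it below -/
import Mathlib

section
/- For any set I and any compact subset K of ℝ^I (product topology), the a-space (K, den) with the subspace topology and the restriction of den is an a-normal space; that is: K is compact Hausdorff; for every n ∈ ℕ the set {x ∈ K : den(x) divides n} is closed in K; and for any two distinct points x, y ∈ K there exist disjoint open sets U ∋ x and V ∋ y such that den(z) = 0 for every z ∈ K \ (U ∪ V). -/
open Classical in
/-- The denominator of a real number: the reduced denominator if rational, `0` if irrational. -/
noncomputable def den (r : ℝ) : ℕ :=
  if h : ∃ q : ℚ, (q : ℝ) = r then h.choose.den else 0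

/-- The least common multiple of a set of naturals, computed in `ℕ` ordered by
divisibility with `0` as top element. -/
noncomputable def setLcm (S : Set ℕ) : ℕ :=
  sInf {n | (∀ s ∈ S, s ∣ n) ∧ ∀ m : ℕ, (∀ s ∈ S, s ∣ m) → n ∣ m}

/-- The denominator of a point of `ℝ^I`. -/
noncomputable def denV {I : Type*} (x : I → ℝ) : ℕ :=
  setLcm (Set.range fun i => den (x i))

lemma den_coe (q : ℚ) : den (q : ℝ) = q.den := by
  have h : ∃ q' : ℚ, (q' : ℝ) = (q : ℝ) := ⟨q, rfl⟩
  rw [den, dif_pos h]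
  have := h.choose_spec
  have : h.choose = q := by exact_mod_cast this
  rw [this]

lemma den_irrational {r : ℝ} (h : Irrational r) : den r = 0 := by
  rw [den, dif_neg]
  rintro ⟨q, rfl⟩
  exact h ⟨q, rfl⟩

lemma den_ne_zero_rat {r : ℝ} (h : den r ≠ 0) : ∃ q : ℚ, (q : ℝ) = r := by
  by_contra hc
  rw [den, dif_neg hc] at h
  exact h rfl

theorem setLcm_spec (S : Set ℕ) :
    (∀ s ∈ S, s ∣ setLcm S) ∧ ∀ m : ℕ, (∀ s ∈ S, s ∣ m) → setLcm S ∣ m := by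
  have hne : {n | (∀ s ∈ S, s ∣ n) ∧ ∀ m : ℕ, (∀ s ∈ S, s ∣ m) → n ∣ m}.Nonempty := by
    by_cases h : ∃ m : ℕ, m ≠ 0 ∧ ∀ s ∈ S, s ∣ m
    · set T := {m : ℕ | m ≠ 0 ∧ ∀ s ∈ S, s ∣ m} with hT
      have hdT : sInf T ∈ T := Nat.sInf_mem h
      refine ⟨sInf T, hdT.2, fun m hm => ?_⟩
      rcases eq_or_ne m 0 with rfl | hm0
      · exact dvd_zero _
      · have hg0 : Nat.gcd (sInf T) m ≠ 0 := fun hg =>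
          hdT.1 (Nat.eq_zero_of_gcd_eq_zero_left hg)
        have hgT : Nat.gcd (sInf T) m ∈ T :=
          ⟨hg0, fun s hs => Nat.dvd_gcd (hdT.2 s hs) (hm s hs)⟩
        have h1 : sInf T ≤ Nat.gcd (sInf T) m := Nat.sInf_le hgT
        have h2 : Nat.gcd (sInf T) m ≤ sInf T :=
          Nat.le_of_dvd (Nat.pos_of_ne_zero hdT.1) (Nat.gcd_dvd_left _ _)
        have : Nat.gcd (sInf T) m = sInf T := le_antisymm h2 h1
        rw [← this]
        exact Nat.gcd_dvd_right _ _
    · refine ⟨0, fun s _ => dvd_zero s, fun m hm => ?_⟩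
      rcases eq_or_ne m 0 with rfl | hm0
      · exact dvd_zero 0
      · exact absurd ⟨m, hm0, hm⟩ h
  exact Nat.sInf_mem hne

lemma setLcm_eq_zero {S : Set ℕ} (h : 0 ∈ S) : setLcm S = 0 :=
  zero_dvd_iff.mp ((setLcm_spec S).1 0 h)

lemma den_dvd_iff {r : ℝ} {n : ℕ} (hn : n ≠ 0) :
    den r ∣ n ↔ r * n ∈ Set.range ((↑) : ℤ → ℝ) := by
  constructor
  · intro hd
    have hd0 : den r ≠ 0 := fun h => hn (zero_dvd_iff.mp (h ▸ hd))
    obtain ⟨q, rfl⟩ := den_ne_zero_rat hd0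
    rw [den_coe] at hd
    obtain ⟨c, hc⟩ := hd
    refine ⟨q.num * c, ?_⟩
    have hden : (q.den : ℝ) ≠ 0 := Nat.cast_ne_zero.mpr q.den_nz
    push_cast
    rw [Rat.cast_def]
    field_simp
    subst hc
    push_cast
    ring
  · rintro ⟨k, hk⟩
    have hn' : (n : ℝ) ≠ 0 := Nat.cast_ne_zero.mpr hn
    have hr : r = ((Rat.divInt k n : ℚ) : ℝ) := by
      rw [Rat.cast_divInt_of_ne_zero _ (by exact_mod_cast hn)]
      push_cast
      field_simp
      linarith [hk]
    rw [hr, den_coe]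
    have := Rat.den_dvd k (n : ℤ)
    rw [Int.natCast_dvd_natCast.symm]
    simpa using this

/-- For any set `I` and compact `K ⊆ ℝ^I`, the a-space `(K, den)` is
a-normal: it is compact Hausdorff, the sets `{x ∈ K : den x ∣ n}` are closed, and any two
distinct points are separated by disjoint open sets outside whose union the denominator
vanishes. -/
theorem compact_subset_of_pi_is_aNormal
    {I : Type*} (K : Set (I → ℝ)) (hK : IsCompact K) :
    CompactSpace K ∧ T2Space K ∧
    (∀ n : ℕ, IsClosed {x : K | denV (x : I → ℝ) ∣ n}) ∧
    ∀ x y : K, x ≠ y → ∃ U V : Set K, IsOpen U ∧ IsOpen V ∧ x ∈ U ∧ y ∈ V ∧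
      Disjoint U V ∧ ∀ z ∈ (U ∪ V)ᶜ, denV (z : I → ℝ) = 0 := by
  refine ⟨isCompact_iff_compactSpace.mp hK, inferInstance, ?_, ?_⟩
  · intro n
    rcases eq_or_ne n 0 with rfl | hn
    · have : {x : K | denV (x : I → ℝ) ∣ 0} = Set.univ := by
        ext x; simp
      rw [this]; exact isClosed_univ
    · have key : ∀ x : K, denV (x : I → ℝ) ∣ n ↔ ∀ i, den ((x : I → ℝ) i) ∣ n := by
        intro x
        constructor
        · intro h i
          exact dvd_trans ((setLcm_spec _).1 _ (Set.mem_range_self i)) h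
        · intro h
          exact (setLcm_spec _).2 n (by rintro s ⟨i, rfl⟩; exact h i)
      have : {x : K | denV (x : I → ℝ) ∣ n} =
          ⋂ i, (fun x : K => (x : I → ℝ) i * n) ⁻¹' (Set.range ((↑) : ℤ → ℝ)) := by
        ext x
        simp only [Set.mem_setOf_eq, Set.mem_iInter, Set.mem_preimage, key x]
        exact forall_congr' fun i => den_dvd_iff hn
      rw [this]
      refine isClosed_iInter fun i => IsClosed.preimage ?_ Int.isClosedEmbedding_coe_real.isClosed_range
      exact ((continuous_apply i).comp continuous_subtype_val).mul continuous_const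
  · intro x y hxy
    have : (x : I → ℝ) ≠ (y : I → ℝ) := fun h => hxy (Subtype.ext h)
    obtain ⟨i, hi⟩ := Function.ne_iff.mp this
    have hopen1 : ∀ t : ℝ, IsOpen {z : K | (z : I → ℝ) i < t} := fun t =>
      isOpen_lt ((continuous_apply i).comp continuous_subtype_val) continuous_const
    have hopen2 : ∀ t : ℝ, IsOpen {z : K | t < (z : I → ℝ) i} := fun t =>
      isOpen_lt continuous_const ((continuous_apply i).comp continuous_subtype_val)
    have hdisj : ∀ t : ℝ, Disjoint {z : K | (z : I → ℝ) i < t} {z : K | t < (z : I → ℝ) i} := by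
      intro t
      rw [Set.disjoint_left]
      intro z hz hz'
      simp only [Set.mem_setOf_eq] at hz hz'
      linarith
    have hout : ∀ t : ℝ, Irrational t →
        ∀ z : K, z ∈ ({z : K | (z : I → ℝ) i < t} ∪ {z : K | t < (z : I → ℝ) i})ᶜ →
        denV (z : I → ℝ) = 0 := by
      intro t ht z hz
      simp only [Set.mem_compl_iff, Set.mem_union, Set.mem_setOf_eq, not_or, not_lt] at hz
      have hzt : (z : I → ℝ) i = t := le_antisymm hz.2 hz.1
      apply setLcm_eq_zero
      refine ⟨i, ?_⟩
      show den ((z : I → ℝ) i) = 0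
      rw [hzt]
      exact den_irrational ht
    rcases hi.lt_or_gt with hlt | hlt
    · obtain ⟨t, ht, h1, h2⟩ := exists_irrational_btwn hlt
      exact ⟨_, _, hopen1 t, hopen2 t, h1, h2, hdisj t, hout t ht⟩
    · obtain ⟨t, ht, h1, h2⟩ := exists_irrational_btwn hlt
      exact ⟨_, _, hopen2 t, hopen1 t, h2, h1, (hdisj t).symm, fun z hz =>
        hout t ht z (by rwa [Set.union_comm] at hz)⟩
end

section
/- Let (Λ_i)_{i ∈ I} be a nonempty family of compact subsets of ℝ that is lower directed, i.e., for every i, j ∈ I there exists k ∈ I with Λ_k ⊆ Λ_i ∩ Λ_j. Then ADC(⋂_{i ∈ I} Λ_i) = ⋂_{i ∈ I} ADC(Λ_i). -/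
/-- `ADC Λ`: the set of admissible denominators for `Λ ⊆ ℝ`. -/
def ADC (Λ : Set ℝ) : Set ℕ := {n | ∃ l ∈ Λ, den l ∣ n}

lemma den_dvd_iff_s4 {n : ℕ} (hn : n ≠ 0) (x : ℝ) :
    den x ∣ n ↔ ∃ m : ℤ, (m : ℝ) = n * x := by
  by_cases h : ∃ q : ℚ, (q : ℝ) = x
  · obtain ⟨q, rfl⟩ := h
    rw [den_coe]
    constructor
    · rintro ⟨k, hk⟩
      refine ⟨q.num * k, ?_⟩
      have hden : (q : ℝ) * (q.den : ℝ) = (q.num : ℝ) := by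
        exact_mod_cast congrArg (Rat.cast : ℚ → ℝ) (Rat.mul_den_eq_num q)
      push_cast
      rw [hk]
      push_cast
      rw [← hden]
      ring
    · rintro ⟨m, hm⟩
      have hq : (q : ℝ) = (m : ℝ) / n := by
        field_simp at hm ⊢
        linarith [hm]
      have hq' : q = (m : ℚ) / (n : ℚ) := by
        exact_mod_cast hq
      have := Rat.den_dvd m (n : ℤ)
      rw [Rat.divInt_eq_div] at this
      rw [hq']
      exact_mod_cast this
  · have : den x = 0 := by rw [den, dif_neg h]
    rw [this]
    simp only [Nat.zero_dvd]
    constructor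
    · intro h0; exact absurd h0 hn
    · rintro ⟨m, hm⟩
      exfalso
      exact h ⟨(m : ℚ) / n, by push_cast; field_simp at hm ⊢; linarith [hm]⟩

/-- For a nonempty, lower directed family of compact subsets of `ℝ`,
`ADC` commutes with the intersection of the family. -/
theorem adc_iInter_of_directed
    {ι : Type*} [Nonempty ι] (Λ : ι → Set ℝ)
    (hcomp : ∀ i, IsCompact (Λ i))
    (hdir : ∀ i j : ι, ∃ k : ι, Λ k ⊆ Λ i ∩ Λ j) :
    ADC (⋂ i, Λ i) = ⋂ i, ADC (Λ i) := by
  ext n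
  simp only [Set.mem_iInter]
  constructor
  · rintro ⟨l, hl, hd⟩ i
    exact ⟨l, Set.mem_iInter.mp hl i, hd⟩
  · intro h
    rcases eq_or_ne n 0 with rfl | hn
    · have hne : ∀ i, (Λ i).Nonempty := fun i => (h i).imp fun l hl => hl.1
      obtain ⟨x, hx⟩ := IsCompact.nonempty_iInter_of_directed_nonempty_isCompact_isClosed Λ
        (fun i j => (hdir i j).imp fun k hk => ⟨fun _ hx => (hk hx).1, fun _ hx => (hk hx).2⟩)
        hne hcomp (fun i => (hcomp i).isClosed)
      exact ⟨x, hx, dvd_zero _⟩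
    · set S : Set ℝ := (fun x => (n : ℝ) * x) ⁻¹' (Set.range ((↑) : ℤ → ℝ)) with hS
      have hScl : IsClosed S :=
        (Int.isClosedEmbedding_coe_real.isClosed_range).preimage (by continuity)
      have hmem : ∀ x, x ∈ S ↔ den x ∣ n := by
        intro x
        rw [den_dvd_iff_s4 hn]
        simp [hS, eq_comm]
      set K : ι → Set ℝ := fun i => Λ i ∩ S with hK
      obtain ⟨x, hx⟩ := IsCompact.nonempty_iInter_of_directed_nonempty_isCompact_isClosed K
        (fun i j => (hdir i j).imp fun k hk =>
          ⟨fun _ hx => ⟨(hk hx.1).1, hx.2⟩, fun _ hx => ⟨(hk hx.1).2, hx.2⟩⟩)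
        (fun i => (h i).imp fun l hl => ⟨hl.1, (hmem l).mpr hl.2⟩)
        (fun i => (hcomp i).inter_right hScl)
        (fun i => ((hcomp i).isClosed).inter hScl)
      rw [Set.mem_iInter] at hx
      exact ⟨x, Set.mem_iInter.mpr fun i => (hx i).1,
        (hmem x).mp (hx (Classical.arbitrary ι)).2⟩
end
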